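/- arXiv:1302.4521 — 7 statements merged into one kernel-verified Lean document; each statement's English description precedes it below -/
import Mathlib

section
/- Let f : X → X and g : Y → Y be endomorphisms in a symmetric monoidal category with g ⊗-balanced. If id_X ⊗ f ⊗ g = f ⊗ id_X ⊗ g as endomorphisms of X ⊗ X ⊗ Y (modulo the canonical associativity isomorphisms), then f ⊗ g is a ⊗-balanced endomorphism of X ⊗ Y. -/
open CategoryTheory Category MonoidalCategory

universe v u

/-- An endomorphism `f : X ⟶ X` in a monoidal category is `⊗`-balanced if
`f ⊗ id_X = id_X ⊗ f` as endomorphisms of `X ⊗ X`. -/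
def TensorBalanced {C : Type u} [Category.{v} C] [MonoidalCategory C]
    {X : C} (f : X ⟶ X) : Prop :=
  f ▷ X = X ◁ f

/-! `f ⊗ g` is balanced iff `(f ⊗ 1) ⊗ (g ⊗ 1) = (1 ⊗ f) ⊗ (1 ⊗ g)`, by conjugating with the
middle-four interchange of `(X ⊗ Y) ⊗ (X ⊗ Y)`. Since `g` is balanced, the right side is
`(1 ⊗ f) ⊗ (g ⊗ 1)`, and the hypothesis, reassociated and tensored with `Y`, identifies it
with the left side. -/

namespace CategoryTheory.MonoidalCategory

variable {C : Type u} [Category.{v} C] [MonoidalCategory C]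

theorem tensorHom_whiskerRight_eq_of_tensorHom_eq {W W' Y Y' : C} {a a' : W ⟶ W'}
    {g : Y ⟶ Y'} (Z : C) (h : a ⊗ₘ g = a' ⊗ₘ g) : a ⊗ₘ (g ▷ Z) = a' ⊗ₘ (g ▷ Z) := by
  rw [← cancel_epi (α_ W Y Z).hom, ← tensorHom_id, ← associator_naturality, h,
    associator_naturality]

theorem whiskerRight_tensorHom_eq_of_whiskerLeft_tensorHom_eq {X Y Y' : C} {f : X ⟶ X}
    {g : Y ⟶ Y'} (h : X ◁ (f ⊗ₘ g) = f ⊗ₘ (X ◁ g)) : f ▷ X ⊗ₘ g = X ◁ f ⊗ₘ g := by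
  rw [← cancel_mono (α_ X X Y').hom, ← tensorHom_id, ← id_tensorHom, associator_naturality,
    associator_naturality, id_tensorHom, id_tensorHom, h]

theorem tensorBalanced_tensorHom_iff [BraidedCategory C] {X Y : C} (f : X ⟶ X) (g : Y ⟶ Y) :
    TensorBalanced (f ⊗ₘ g) ↔ f ▷ X ⊗ₘ g ▷ Y = X ◁ f ⊗ₘ Y ◁ g := by
  have : IsIso (tensorμ X Y X Y) :=
    ⟨tensorδ X Y X Y, tensorμ_tensorδ X Y X Y, tensorδ_tensorμ X Y X Y⟩
  rw [TensorBalanced, ← cancel_mono (tensorμ X Y X Y), tensorμ_natural_left,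
    tensorμ_natural_right, cancel_epi]

end CategoryTheory.MonoidalCategory

/-- If `g` is ⊗-balanced and `id_X ⊗ f ⊗ g = f ⊗ id_X ⊗ g` as endomorphisms of
`X ⊗ X ⊗ Y`, then `f ⊗ g` is a ⊗-balanced endomorphism of `X ⊗ Y`. -/
theorem tensorBalanced_tensorHom
    {C : Type u} [Category.{v} C] [MonoidalCategory C] [SymmetricCategory C]
    {X Y : C} (f : X ⟶ X) (g : Y ⟶ Y) (hg : TensorBalanced g)
    (h : X ◁ (f ⊗ₘ g) = f ⊗ₘ (X ◁ g)) :
    TensorBalanced (f ⊗ₘ g) := by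
  rw [tensorBalanced_tensorHom_iff, ← hg]
  exact tensorHom_whiskerRight_eq_of_tensorHom_eq Y
    (whiskerRight_tensorHom_eq_of_whiskerLeft_tensorHom_eq h)
end

section
/- Let X and Y be objects of a symmetric monoidal category. If f : X → X is ⊗-balanced, then f ⊗ id_Y is a ⊗-balanced endomorphism of X ⊗ Y. Similarly, if g : Y → Y is ⊗-balanced, then id_X ⊗ g is a ⊗-balanced endomorphism of X ⊗ Y. In particular, – ⊗ Y and X ⊗ – induce ring homomorphisms E_X → E_{X⊗Y} and E_Y → E_{X⊗Y}. -/
/-!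
The shuffle `tensorμ : (X ⊗ Y) ⊗ (X ⊗ Y) ≅ (X ⊗ X) ⊗ (Y ⊗ Y)` conjugates `(f ⊗ g) ⊗ id` into
`(f ⊗ id) ⊗ (g ⊗ id)` and `id ⊗ (f ⊗ g)` into `(id ⊗ f) ⊗ (id ⊗ g)`, so a tensor product of
balanced endomorphisms is balanced; whiskering is tensoring with the balanced identity.
The ring homomorphisms are the actions on endomorphisms of the additive functors `- ⊗ Y`, `X ⊗ -`.
-/

open CategoryTheory Category MonoidalCategory

universe v u

namespace CategoryTheory.Functor

variable {C D : Type*} [Category C] [Category D] [Preadditive C] [Preadditive D]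

def mapEndRingHom (F : C ⥤ D) [F.Additive] (X : C) : End X →+* End (F.obj X) :=
  { F.mapEnd X, F.mapAddHom with }

end CategoryTheory.Functor

section

variable {C : Type u} [Category.{v} C] [MonoidalCategory C]

theorem tensorBalanced_id (X : C) : TensorBalanced (𝟙 X) := by
  simp [TensorBalanced]

instance [BraidedCategory C] (X₁ X₂ Y₁ Y₂ : C) : IsIso (tensorμ X₁ X₂ Y₁ Y₂) :=
  ⟨tensorδ X₁ X₂ Y₁ Y₂, tensorμ_tensorδ X₁ X₂ Y₁ Y₂, tensorδ_tensorμ X₁ X₂ Y₁ Y₂⟩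

theorem TensorBalanced.tensorHom [BraidedCategory C] {X Y : C} {f : X ⟶ X} {g : Y ⟶ Y}
    (hf : TensorBalanced f) (hg : TensorBalanced g) : TensorBalanced (f ⊗ₘ g) := by
  rw [TensorBalanced, ← cancel_mono (tensorμ X Y X Y), tensorμ_natural_left,
    tensorμ_natural_right, hf, hg]

theorem TensorBalanced.whiskerRight [BraidedCategory C] {X : C} {f : X ⟶ X}
    (hf : TensorBalanced f) (Y : C) : TensorBalanced (f ▷ Y) := by
  simpa using hf.tensorHom (tensorBalanced_id Y)

theorem TensorBalanced.whiskerLeft [BraidedCategory C] (X : C) {Y : C} {g : Y ⟶ Y}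
    (hg : TensorBalanced g) : TensorBalanced (X ◁ g) := by
  simpa using (tensorBalanced_id X).tensorHom hg

end

/-- If `f : X ⟶ X` is ⊗-balanced then `f ⊗ id_Y` is a ⊗-balanced endomorphism of
`X ⊗ Y`; similarly if `g : Y ⟶ Y` is ⊗-balanced then `id_X ⊗ g` is ⊗-balanced.
In particular `– ⊗ Y` and `X ⊗ –` induce ring homomorphisms
`E_X → E_{X ⊗ Y}` and `E_Y → E_{X ⊗ Y}`. -/
theorem tensorBalanced_whisker
    {C : Type u} [Category.{v} C] [Preadditive C]
    [MonoidalCategory C] [SymmetricCategory C] [MonoidalPreadditive C]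
    (X Y : C) :
    (∀ f : X ⟶ X, TensorBalanced f → TensorBalanced (f ▷ Y)) ∧
    (∀ g : Y ⟶ Y, TensorBalanced g → TensorBalanced (X ◁ g)) ∧
    (∃ φ : End X →+* End (X ⊗ Y), ∀ f : End X, φ f = (f : X ⟶ X) ▷ Y) ∧
    (∃ ψ : End Y →+* End (X ⊗ Y), ∀ g : End Y, ψ g = X ◁ (g : Y ⟶ Y)) :=
  ⟨fun _ hf => hf.whiskerRight Y, fun _ hg => hg.whiskerLeft X,
    ⟨(tensorRight Y).mapEndRingHom X, fun _ => rfl⟩,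
    ⟨(tensorLeft X).mapEndRingHom Y, fun _ => rfl⟩⟩
end

section
/- Let α : X ≅ Y be an isomorphism in a symmetric monoidal category. Then the map α_* : f ↦ α ∘ f ∘ α⁻¹ sends ⊗-balanced endomorphisms of X to ⊗-balanced endomorphisms of Y (and is a ring isomorphism E_X ≅ E_Y). Moreover, if f is a ⊗-balanced endomorphism of X, then f ⊗ id_Y = id_X ⊗ α_*(f) as endomorphisms of X ⊗ Y. -/
open CategoryTheory Category MonoidalCategory

universe v u

def CategoryTheory.Iso.conjRingEquiv {C : Type u} [Category.{v} C] [Preadditive C] {X Y : C}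
    (α : X ≅ Y) : End X ≃+* End Y :=
  { α.conj with
    map_add' := fun f g => by
      show α.inv ≫ (f + g : X ⟶ X) ≫ α.hom = α.inv ≫ f ≫ α.hom + α.inv ≫ g ≫ α.hom
      rw [Preadditive.add_comp, Preadditive.comp_add] }

namespace TensorBalanced

variable {C : Type u} [Category.{v} C] [MonoidalCategory C] {X Y : C} {f : X ⟶ X}

theorem whiskerRight_eq_whiskerLeft_conj (hf : TensorBalanced f) (α : X ≅ Y) :
    f ▷ Y = X ◁ (α.inv ≫ f ≫ α.hom) := by
  calc f ▷ Y = X ◁ α.inv ≫ X ◁ α.hom ≫ f ▷ Y := by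
        rw [← MonoidalCategory.whiskerLeft_comp_assoc, α.inv_hom_id, whiskerLeft_id, id_comp]
    _ = X ◁ α.inv ≫ f ▷ X ≫ X ◁ α.hom := by rw [whisker_exchange]
    _ = X ◁ (α.inv ≫ f ≫ α.hom) := by rw [hf]; simp only [MonoidalCategory.whiskerLeft_comp]

theorem conj (hf : TensorBalanced f) (α : X ≅ Y) : TensorBalanced (α.inv ≫ f ≫ α.hom) := by
  calc (α.inv ≫ f ≫ α.hom) ▷ Y = α.inv ▷ Y ≫ f ▷ Y ≫ α.hom ▷ Y := by
        simp only [comp_whiskerRight]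
    _ = α.inv ▷ Y ≫ X ◁ (α.inv ≫ f ≫ α.hom) ≫ α.hom ▷ Y := by
        rw [hf.whiskerRight_eq_whiskerLeft_conj α]
    _ = Y ◁ (α.inv ≫ f ≫ α.hom) := by
        rw [whisker_exchange, ← comp_whiskerRight_assoc, α.inv_hom_id, id_whiskerRight, id_comp]

end TensorBalanced

theorem tensorBalanced_conj_general
    {C : Type u} [Category.{v} C] [Preadditive C]
    [MonoidalCategory C]
    {X Y : C} (α : X ≅ Y) :
    (∀ f : X ⟶ X, TensorBalanced f → TensorBalanced (α.inv ≫ f ≫ α.hom)) ∧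
    (∃ e : End X ≃+* End Y, ∀ f : End X, e f = α.inv ≫ (f : X ⟶ X) ≫ α.hom) ∧
    (∀ f : X ⟶ X, TensorBalanced f → f ▷ Y = X ◁ (α.inv ≫ f ≫ α.hom)) :=
  ⟨fun _ hf => hf.conj α, ⟨α.conjRingEquiv, fun _ => rfl⟩,
    fun _ hf => hf.whiskerRight_eq_whiskerLeft_conj α⟩

/-- For an isomorphism `α : X ≅ Y`, conjugation `f ↦ α ∘ f ∘ α⁻¹` sends ⊗-balanced
endomorphisms of `X` to ⊗-balanced endomorphisms of `Y` (and is a ring isomorphism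
`E_X ≅ E_Y`); moreover for ⊗-balanced `f` one has `f ⊗ id_Y = id_X ⊗ α_*(f)`. -/
theorem tensorBalanced_conj
    {C : Type u} [Category.{v} C] [Preadditive C]
    [MonoidalCategory C] [SymmetricCategory C] [MonoidalPreadditive C]
    {X Y : C} (α : X ≅ Y) :
    (∀ f : X ⟶ X, TensorBalanced f → TensorBalanced (α.inv ≫ f ≫ α.hom)) ∧
    (∃ e : End X ≃+* End Y, ∀ f : End X, e f = α.inv ≫ (f : X ⟶ X) ≫ α.hom) ∧
    (∀ f : X ⟶ X, TensorBalanced f → f ▷ Y = X ◁ (α.inv ≫ f ≫ α.hom)) :=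
  tensorBalanced_conj_general α
end

section
/- If f : X → X is a ⊗-balanced endomorphism in a symmetric monoidal category, then for every object c one has f ⊗ id_c ⊗ id_X = id_X ⊗ id_c ⊗ f as endomorphisms of X ⊗ c ⊗ X (modulo the canonical associativity isomorphisms). -/
open CategoryTheory Category MonoidalCategory

universe v u

section

variable {C : Type u} [Category.{v} C] [MonoidalCategory C]

lemma TensorBalanced.whiskerRight_tensor_eq {X : C} {f : X ⟶ X} (hf : TensorBalanced f)
    (c : C) : f ▷ (X ⊗ c) = X ◁ (f ▷ c) := by
  rw [whiskerRight_tensor, hf, whisker_assoc]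
  simp

lemma whiskerRight_eq_whiskerLeft_conj {X X' Z Z' : C} (f : X ⟶ X') (e : Z ≅ Z') :
    f ▷ Z = X ◁ e.hom ≫ f ▷ Z' ≫ X' ◁ e.inv := by
  rw [whisker_exchange_assoc]
  simp

lemma braiding_conj_whiskerRight [BraidedCategory C] {X X' Y : C} (f : X ⟶ X') :
    (β_ Y X).hom ≫ f ▷ Y ≫ (β_ Y X').inv = Y ◁ f := by
  rw [← BraidedCategory.braiding_naturality_right_assoc]
  simp

end

/-- If `f : X ⟶ X` is ⊗-balanced then for every object `c`,
`f ⊗ id_c ⊗ id_X = id_X ⊗ id_c ⊗ f` as endomorphisms of `X ⊗ c ⊗ X`. -/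
theorem tensorBalanced_middle
    {C : Type u} [Category.{v} C] [MonoidalCategory C] [SymmetricCategory C]
    {X : C} (f : X ⟶ X) (hf : TensorBalanced f) (c : C) :
    f ▷ (c ⊗ X) = X ◁ (c ◁ f) := by
  calc f ▷ (c ⊗ X) = X ◁ (β_ c X).hom ≫ f ▷ (X ⊗ c) ≫ X ◁ (β_ c X).inv :=
        whiskerRight_eq_whiskerLeft_conj f (β_ c X)
    _ = X ◁ ((β_ c X).hom ≫ f ▷ c ≫ (β_ c X).inv) := by
        rw [hf.whiskerRight_tensor_eq, MonoidalCategory.whiskerLeft_comp,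
          MonoidalCategory.whiskerLeft_comp]
    _ = X ◁ (c ◁ f) := by rw [braiding_conj_whiskerRight]
end

section
/- Let a₁, …, aₙ be objects of an additive symmetric monoidal category with biproducts, and let f : a₁ ⊕ ⋯ ⊕ aₙ → a₁ ⊕ ⋯ ⊕ aₙ be an endomorphism of the biproduct with matrix components f_ij : a_j → a_i. Then f is ⊗-balanced if and only if: (1) id_{a_i} ⊗ f_jj = f_ii ⊗ id_{a_j} as endomorphisms of a_i ⊗ a_j for all i, j, and (2) f_ij ⊗ id_{a₁ ⊕ ⋯ ⊕ aₙ} = 0 whenever i ≠ j. -/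
/-!
Since `⊗` distributes over biproducts, an endomorphism of `(⨁ a) ⊗ (⨁ a)` is determined by its
entries `a i ⊗ a j ⟶ a k ⊗ a l`. Those of `f ▷ ⨁ a` and `(⨁ a) ◁ f` are `f_ki ⊗ δ_jl` and
`δ_ki ⊗ f_lj`, where `δ_ki = ι_i ≫ π_k`. Comparing them for `i = k, j = l` gives condition (1);
for `i ≠ k, j = l` it says `f_ki ▷ a j = 0`, and for `i = k, j ≠ l` it says `a i ◁ f_lj = 0`,
which the braiding turns into `f_lj ▷ a i = 0`. Finally `g ▷ ⨁ a` vanishes iff every `g ▷ a j`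
does.
-/

open CategoryTheory Category Limits MonoidalCategory

universe v u

namespace CategoryTheory.MonoidalCategory

theorem whiskerLeft_eq_zero_iff {C : Type u} [Category.{v} C] [Preadditive C]
    [MonoidalCategory C] [BraidedCategory C] (X : C) {Y Z : C} (g : Y ⟶ Z) :
    X ◁ g = 0 ↔ g ▷ X = 0 := by
  rw [← cancel_mono (β_ X Z).hom, ← cancel_epi (β_ X Y).inv,
    BraidedCategory.braiding_naturality_right]
  simp

variable {C : Type u} [Category.{v} C] [Preadditive C] [HasFiniteBiproducts C]
  [MonoidalCategory C] [MonoidalPreadditive C]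

theorem biproduct_tensor_hom_ext_iff {I J K L : Type} [Finite I] [Finite J] [Finite K] [Finite L]
    {a : I → C} {b : J → C} {c : K → C} {d : L → C} {g h : (⨁ a) ⊗ (⨁ b) ⟶ (⨁ c) ⊗ (⨁ d)} :
    g = h ↔ ∀ i j k l,
      (biproduct.ι a i ⊗ₘ biproduct.ι b j) ≫ g ≫ (biproduct.π c k ⊗ₘ biproduct.π d l) =
        (biproduct.ι a i ⊗ₘ biproduct.ι b j) ≫ h ≫ (biproduct.π c k ⊗ₘ biproduct.π d l) := by
  refine ⟨by rintro rfl; simp, fun w => ?_⟩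
  ext i j k l
  have := w i j k l
  rw [tensorHom_def', tensorHom_def] at this
  simpa only [assoc] using this

theorem whiskerRight_biproduct_eq_zero_iff {K : Type} [Finite K] {X Y : C} (g : X ⟶ Y)
    (b : K → C) : g ▷ (⨁ b) = 0 ↔ ∀ k, g ▷ b k = 0 := by
  refine ⟨fun h k => ?_, fun h => ?_⟩
  · calc g ▷ b k = (X ◁ biproduct.ι b k) ≫ g ▷ (⨁ b) ≫ (Y ◁ biproduct.π b k) := by
          rw [whisker_exchange_assoc, ← whiskerLeft_comp, biproduct.ι_π_self, whiskerLeft_id,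
            comp_id]
      _ = 0 := by rw [h, zero_comp, comp_zero]
  · apply leftDistributor_ext_right
    intro k
    rw [← whisker_exchange, h, comp_zero, zero_comp]

end CategoryTheory.MonoidalCategory

section

variable {C : Type u} [Category.{v} C] [Preadditive C] [HasFiniteBiproducts C]
  [MonoidalCategory C] [MonoidalPreadditive C]

theorem tensorBalanced_biproduct_iff_entries {J : Type} [Finite J] (a : J → C)
    (f : (⨁ a) ⟶ (⨁ a)) :
    TensorBalanced f ↔ ∀ i j k l,
      (biproduct.ι a i ≫ f ≫ biproduct.π a k) ⊗ₘ (biproduct.ι a j ≫ biproduct.π a l) =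
        (biproduct.ι a i ≫ biproduct.π a k) ⊗ₘ (biproduct.ι a j ≫ f ≫ biproduct.π a l) := by
  rw [TensorBalanced, biproduct_tensor_hom_ext_iff]
  simp only [← tensorHom_id, ← id_tensorHom, tensorHom_comp_tensorHom, id_comp]

theorem tensorBalanced_biproduct_iff_components [BraidedCategory C] {J : Type} [Finite J]
    (a : J → C) (f : (⨁ a) ⟶ (⨁ a)) :
    TensorBalanced f ↔
      (∀ i j, a i ◁ (biproduct.ι a j ≫ f ≫ biproduct.π a j) =
          (biproduct.ι a i ≫ f ≫ biproduct.π a i) ▷ a j) ∧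
        ∀ i j, i ≠ j → ∀ k, (biproduct.ι a j ≫ f ≫ biproduct.π a i) ▷ a k = 0 := by
  rw [tensorBalanced_biproduct_iff_entries]
  constructor
  · intro h
    refine ⟨fun i j => by simpa using (h i j i j).symm, fun i j hij k => ?_⟩
    simpa [biproduct.ι_π_ne a hij.symm] using h j k i k
  · rintro ⟨hdiag, hoff⟩ i j k l
    by_cases hik : i = k
    · subst hik
      by_cases hjl : j = l
      · subst hjl
        simpa using (hdiag i j).symm
      · have hzero : a i ◁ (biproduct.ι a j ≫ f ≫ biproduct.π a l) = 0 :=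
          (whiskerLeft_eq_zero_iff _ _).2 (hoff l j (Ne.symm hjl) i)
        simp [biproduct.ι_π_ne a hjl, hzero]
    · rw [MonoidalCategory.tensorHom_def, hoff k i (Ne.symm hik) j, zero_comp,
        biproduct.ι_π_ne a hik, MonoidalPreadditive.zero_tensor]

end

/-- An endomorphism `f` of a biproduct `a₁ ⊕ ⋯ ⊕ aₙ`, with matrix components
`f_ij = ι_j ≫ f ≫ π_i : a_j ⟶ a_i`, is ⊗-balanced if and only if
(1) `id_{a_i} ⊗ f_jj = f_ii ⊗ id_{a_j}` for all `i, j`, and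
(2) `f_ij ⊗ id = 0` whenever `i ≠ j`. -/
theorem tensorBalanced_biproduct_iff
    {C : Type u} [Category.{v} C] [Preadditive C] [HasFiniteBiproducts C]
    [MonoidalCategory C] [SymmetricCategory C] [MonoidalPreadditive C]
    {n : ℕ} (a : Fin n → C) (f : (⨁ a) ⟶ (⨁ a)) :
    TensorBalanced f ↔
      ((∀ i j : Fin n,
          (a i) ◁ (biproduct.ι a j ≫ f ≫ biproduct.π a j) =
            (biproduct.ι a i ≫ f ≫ biproduct.π a i) ▷ (a j)) ∧
        (∀ i j : Fin n, i ≠ j →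
          (biproduct.ι a j ≫ f ≫ biproduct.π a i) ▷ (⨁ a) = 0)) := by
  simp only [tensorBalanced_biproduct_iff_components, whiskerRight_biproduct_eq_zero_iff]
end

section
/- Let f : a → b and g : c → d be morphisms in a tensor triangulated category, and let a →f b → Z → Σa be a distinguished triangle. If id_Z ⊗ g = 0 as a morphism Z ⊗ c → Z ⊗ d, then there exists a morphism u : b ⊗ c → a ⊗ d such that id_a ⊗ g = u ∘ (f ⊗ id_c), and there exists a morphism v : b ⊗ c → a ⊗ d such that id_b ⊗ g = (f ⊗ id_d) ∘ v. -/
open CategoryTheory Category Limits Pretriangulated MonoidalCategory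

universe v u

/-!
Tensoring the triangle `a → b → Z → a⟦1⟧` on the right with `c` or `d` gives distinguished
triangles, so maps out of `a ⊗ c` killing `Z⟦-1⟧ ⊗ c` factor through `f ▷ c`, and maps into
`b ⊗ d` killed by `b ⊗ d → Z ⊗ d` factor through `f ▷ d`. By the interchange law, `a ◁ g` and
`b ◁ g` satisfy these vanishing conditions as soon as `Z⟦-1⟧ ◁ g = 0` and `Z ◁ g = 0`; the
former follows from the latter because `Z⟦-1⟧ ≅ 𝟙⟦-1⟧ ⊗ Z`.
-/

section Monoidal

variable {C : Type u} [Category.{v} C] [Preadditive C] [MonoidalCategory C] {c d : C}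
  {g : c ⟶ d}

lemma whiskerLeft_eq_zero_of_iso {X Y : C} (e : X ≅ Y) (h : Y ◁ g = 0) : X ◁ g = 0 := by
  rw [← cancel_mono (e.hom ▷ d), whisker_exchange, h, comp_zero, zero_comp]

lemma tensor_whiskerLeft_eq_zero [MonoidalPreadditive C] (Y : C) {Z : C} (h : Z ◁ g = 0) :
    (Y ⊗ Z) ◁ g = 0 := by
  rw [tensor_whiskerLeft, h, MonoidalPreadditive.whiskerLeft_zero, zero_comp, comp_zero]

lemma shift_whiskerLeft_eq_zero [HasShift C ℤ] [MonoidalPreadditive C] {Z : C}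
    [(tensorRight Z).CommShift ℤ] (n : ℤ) (h : Z ◁ g = 0) : Z⟦n⟧ ◁ g = 0 :=
  whiskerLeft_eq_zero_of_iso
    ((shiftFunctor C n).mapIso (λ_ Z).symm ≪≫ (((tensorRight Z).commShiftIso n).app (𝟙_ C)).symm)
    (tensor_whiskerLeft_eq_zero _ h)

end Monoidal

section Triangulated

variable {C : Type u} [Category.{v} C] [Preadditive C] [HasZeroObject C] [HasShift C ℤ]
  [∀ n : ℤ, (shiftFunctor C n).Additive] [Pretriangulated C] [MonoidalCategory C] {c d : C}
  {g : c ⟶ d}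

lemma exists_whiskerLeft_eq_whiskerRight_mor₁_comp [(tensorRight c).CommShift ℤ]
    [(tensorRight c).IsTriangulated] {T : Triangle C} (hT : T ∈ distTriang C)
    (hg : T.obj₃⟦(-1 : ℤ)⟧ ◁ g = 0) :
    ∃ u : T.obj₂ ⊗ c ⟶ T.obj₁ ⊗ d, T.obj₁ ◁ g = T.mor₁ ▷ c ≫ u :=
  Triangle.yoneda_exact₂ _ ((tensorRight c).map_distinguished _ (inv_rot_of_distTriang _ hT)) _
    (by
      change T.invRotate.mor₁ ▷ c ≫ T.invRotate.obj₂ ◁ g = 0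
      have hg' : T.invRotate.obj₁ ◁ g = 0 := hg
      rw [← whisker_exchange, hg', zero_comp])

lemma exists_whiskerLeft_eq_comp_whiskerRight_mor₁ [(tensorRight d).CommShift ℤ]
    [(tensorRight d).IsTriangulated] {T : Triangle C} (hT : T ∈ distTriang C)
    (hg : T.obj₃ ◁ g = 0) : ∃ v : T.obj₂ ⊗ c ⟶ T.obj₁ ⊗ d, T.obj₂ ◁ g = v ≫ T.mor₁ ▷ d :=
  Triangle.coyoneda_exact₂ _ ((tensorRight d).map_distinguished _ hT) _
    (by
      change T.obj₂ ◁ g ≫ T.mor₂ ▷ d = 0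
      rw [whisker_exchange, hg, comp_zero])

end Triangulated

/-- Let `a →f b → Z → Σa` be a distinguished triangle and `g : c ⟶ d` a morphism with
`id_Z ⊗ g = 0`. Then `id_a ⊗ g` factors through `f ⊗ id_c`, and `id_b ⊗ g` factors
through `f ⊗ id_d`. -/
theorem exists_factorization_of_whiskerLeft_cone_eq_zero
    {C : Type u} [Category.{v} C] [Preadditive C] [HasZeroObject C]
    [HasShift C ℤ] [∀ n : ℤ, (shiftFunctor C n).Additive] [Pretriangulated C]
    [MonoidalCategory C] [SymmetricCategory C] [MonoidalPreadditive C]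
    [∀ a : C, (tensorLeft a).CommShift ℤ] [∀ a : C, (tensorLeft a).IsTriangulated]
    [∀ a : C, (tensorRight a).CommShift ℤ] [∀ a : C, (tensorRight a).IsTriangulated]
    {a b c d Z : C} (f : a ⟶ b) (g : c ⟶ d)
    (u' : b ⟶ Z) (w : Z ⟶ a⟦(1 : ℤ)⟧)
    (hT : Triangle.mk f u' w ∈ (distTriang C))
    (hg : Z ◁ g = 0) :
    (∃ u : b ⊗ c ⟶ a ⊗ d, a ◁ g = (f ▷ c) ≫ u) ∧
    (∃ v : b ⊗ c ⟶ a ⊗ d, b ◁ g = v ≫ (f ▷ d)) :=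
  ⟨exists_whiskerLeft_eq_whiskerRight_mor₁_comp hT (shift_whiskerLeft_eq_zero (-1) hg),
    exists_whiskerLeft_eq_comp_whiskerRight_mor₁ hT hg⟩
end

section
/- Let K be a rigid symmetric monoidal category (every object has a dual), and for a morphism f let f^∨ denote its dual (mate) morphism. If f : X → X is a ⊗-balanced endomorphism, then f^∨ : X^∨ → X^∨ is a ⊗-balanced endomorphism of the dual object X^∨. -/
/-!
Morphisms into `Xᘁ ⊗ Xᘁ`, the dual of `X ⊗ X` with the nested evaluation, are determined by their
transposes. Transposing, `fᘁ` on the outer factor becomes `f` on the second factor of `X ⊗ X` and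
`fᘁ` on the inner factor becomes `f` on the first one, so the two sides of the goal transpose to
the two sides of the hypothesis `f ▷ X = X ◁ f`.
-/

open CategoryTheory Category MonoidalCategory

universe v u

namespace CategoryTheory

variable {C : Type u} [Category.{v} C] [MonoidalCategory C]

theorem ExactPairing.whiskerRight_comp_evaluation_injective {X Y A : C} [ExactPairing X Y] :
    Function.Injective fun g : A ⟶ Y => g ▷ X ≫ ε_ X Y := by
  have snake (g : A ⟶ Y) : g = 𝟙 A ⊗≫ A ◁ η_ X Y ⊗≫ (g ▷ X ≫ ε_ X Y) ▷ Y ⊗≫ 𝟙 Y :=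
    calc g = g ⊗≫ (Y ◁ η_ X Y ⊗≫ ε_ X Y ▷ Y) ⊗≫ 𝟙 Y := by
          rw [coevaluation_evaluation'']; monoidal
      _ = 𝟙 A ⊗≫ (g ▷ 𝟙_ C ≫ Y ◁ η_ X Y) ⊗≫ ε_ X Y ▷ Y ⊗≫ 𝟙 Y := by monoidal
      _ = 𝟙 A ⊗≫ (A ◁ η_ X Y ≫ g ▷ (X ⊗ Y)) ⊗≫ ε_ X Y ▷ Y ⊗≫ 𝟙 Y := by
          rw [whisker_exchange]
      _ = _ := by monoidal
  intro g h (e : g ▷ X ≫ ε_ X Y = h ▷ X ≫ ε_ X Y)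
  rw [snake g, snake h, e]

theorem rightAdjointMate_whiskerRight_whiskerRight_comp_evaluation {X₁ X₂ X₂' : C}
    [HasRightDual X₁] [HasRightDual X₂] [HasRightDual X₂'] (f : X₂ ⟶ X₂') :
    (fᘁ ▷ X₁ᘁ) ▷ (X₁ ⊗ X₂) ≫ ε_ (X₁ ⊗ X₂) (X₂ᘁ ⊗ X₁ᘁ) =
      ((X₂'ᘁ : C) ⊗ X₁ᘁ) ◁ X₁ ◁ f ≫ ε_ (X₁ ⊗ X₂') (X₂'ᘁ ⊗ X₁ᘁ) :=
  calc _ = 𝟙 _ ⊗≫ (fᘁ ▷ (X₁ᘁ ⊗ X₁) ≫ (X₂ᘁ : C) ◁ ε_ X₁ X₁ᘁ) ▷ X₂ ⊗≫ ε_ X₂ X₂ᘁ := by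
        rw [ExactPairing.tensor_evaluation]; monoidal
    _ = 𝟙 _ ⊗≫ ((X₂'ᘁ : C) ◁ ε_ X₁ X₁ᘁ ≫ fᘁ ▷ 𝟙_ C) ▷ X₂ ⊗≫ ε_ X₂ X₂ᘁ := by
        rw [whisker_exchange]
    _ = 𝟙 _ ⊗≫ (X₂'ᘁ : C) ◁ ε_ X₁ X₁ᘁ ▷ X₂ ⊗≫ (fᘁ ▷ X₂ ≫ ε_ X₂ X₂ᘁ) := by monoidal
    _ = 𝟙 _ ⊗≫ (X₂'ᘁ : C) ◁ (ε_ X₁ X₁ᘁ ▷ X₂ ≫ 𝟙_ C ◁ f) ⊗≫ ε_ X₂' X₂'ᘁ := by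
        rw [rightAdjointMate_comp_evaluation]; monoidal
    _ = 𝟙 _ ⊗≫ (X₂'ᘁ : C) ◁ ((X₁ᘁ ⊗ X₁) ◁ f ≫ ε_ X₁ X₁ᘁ ▷ X₂') ⊗≫ ε_ X₂' X₂'ᘁ := by
        rw [whisker_exchange]
    _ = _ := by
        rw [ExactPairing.tensor_evaluation]; monoidal

theorem whiskerLeft_rightAdjointMate_whiskerRight_comp_evaluation {X₁ X₁' X₂ : C}
    [HasRightDual X₁] [HasRightDual X₁'] [HasRightDual X₂] (f : X₁ ⟶ X₁') :
    ((X₂ᘁ : C) ◁ fᘁ) ▷ (X₁ ⊗ X₂) ≫ ε_ (X₁ ⊗ X₂) (X₂ᘁ ⊗ X₁ᘁ) =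
      ((X₂ᘁ : C) ⊗ X₁'ᘁ) ◁ f ▷ X₂ ≫ ε_ (X₁' ⊗ X₂) (X₂ᘁ ⊗ X₁'ᘁ) :=
  calc _ = 𝟙 _ ⊗≫ (X₂ᘁ : C) ◁ (fᘁ ▷ X₁ ≫ ε_ X₁ X₁ᘁ) ▷ X₂ ⊗≫ ε_ X₂ X₂ᘁ := by
        rw [ExactPairing.tensor_evaluation]; monoidal
    _ = 𝟙 _ ⊗≫ (X₂ᘁ : C) ◁ ((X₁'ᘁ : C) ◁ f ≫ ε_ X₁' X₁'ᘁ) ▷ X₂ ⊗≫ ε_ X₂ X₂ᘁ := by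
        rw [rightAdjointMate_comp_evaluation]
    _ = _ := by
        rw [ExactPairing.tensor_evaluation]; monoidal

end CategoryTheory

theorem tensorBalanced_rightAdjointMate_general
    {C : Type u} [Category.{v} C] [MonoidalCategory C]
    [RigidCategory C]
    {X : C} (f : X ⟶ X) (hf : TensorBalanced f) :
    TensorBalanced (fᘁ) := by
  apply ExactPairing.whiskerRight_comp_evaluation_injective (X := X ⊗ X)
  calc (fᘁ ▷ Xᘁ) ▷ (X ⊗ X) ≫ ε_ _ _ = ((Xᘁ : C) ⊗ Xᘁ) ◁ X ◁ f ≫ ε_ _ _ :=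
        rightAdjointMate_whiskerRight_whiskerRight_comp_evaluation f
    _ = ((Xᘁ : C) ⊗ Xᘁ) ◁ f ▷ X ≫ ε_ _ _ := by rw [← hf]
    _ = ((Xᘁ : C) ◁ fᘁ) ▷ (X ⊗ X) ≫ ε_ _ _ :=
        (whiskerLeft_rightAdjointMate_whiskerRight_comp_evaluation f).symm

/-- In a rigid symmetric monoidal category, the dual (mate) of a ⊗-balanced
endomorphism is ⊗-balanced. -/
theorem tensorBalanced_rightAdjointMate
    {C : Type u} [Category.{v} C] [MonoidalCategory C] [SymmetricCategory C]
    [RigidCategory C]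
    {X : C} (f : X ⟶ X) (hf : TensorBalanced f) :
    TensorBalanced (fᘁ) :=
  tensorBalanced_rightAdjointMate_general f hf
end
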